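/- Let G be a simple undirected graph on {1,…,n} with maximum degree d, let (i,j) be a pair of distinct nodes that is NOT an edge of G, and let L be a Bernoulli(p) test. Then P_G[Y=1 | {i,j} ⊆ L] ≤ 2dp + P_G[Y=1]. -/

import Mathlib

open scoped BigOperators Classical
open Finset Filter

noncomputable section

/-- The set of all potential edges: unordered pairs of distinct nodes of `Fin n`. -/
def allPairs (n : ℕ) : Finset (Sym2 (Fin n)) :=
  Finset.univ.filter fun e => ¬ e.IsDiag

/-- Both endpoints of the pair `e` lie in the test `L`. -/
def pairIn {n : ℕ} (e : Sym2 (Fin n)) (L : Finset (Fin n)) : Prop :=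
  ∀ v ∈ e, v ∈ L

/-- The test `L` covers some edge of the edge set `E` (positive outcome `Y = 1`). -/
def covers {n : ℕ} (E : Finset (Sym2 (Fin n))) (L : Finset (Fin n)) : Prop :=
  ∃ e ∈ E, pairIn e L

/-- ER(n,q) probability weight of a given edge set `E`. -/
def erWeight (n : ℕ) (q : ℝ) (E : Finset (Sym2 (Fin n))) : ℝ :=
  q ^ E.card * (1 - q) ^ ((allPairs n).card - E.card)

/-- Probability of an event under the Erdős–Rényi random graph ER(n,q). -/
def erProb (n : ℕ) (q : ℝ) (A : Finset (Sym2 (Fin n)) → Prop) : ℝ :=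
  ∑ E ∈ (allPairs n).powerset, if A E then erWeight n q E else 0

/-- Bernoulli(p) probability weight of a single test `L ⊆ {1,…,n}`. -/
def testWeight (n : ℕ) (p : ℝ) (L : Finset (Fin n)) : ℝ :=
  p ^ L.card * (1 - p) ^ (n - L.card)

/-- Probability of an event for a single Bernoulli(p) test. -/
def bernProb (n : ℕ) (p : ℝ) (A : Finset (Fin n) → Prop) : ℝ :=
  ∑ L : Finset (Fin n), if A L then testWeight n p L else 0

/-- Probability weight of `t` i.i.d. Bernoulli(p) tests. -/
def testsWeight (n t : ℕ) (p : ℝ) (Ls : Fin t → Finset (Fin n)) : ℝ :=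
  ∏ i, testWeight n p (Ls i)

/-- Probability of an event for `t` i.i.d. Bernoulli(p) tests. -/
def bernTestsProb (n t : ℕ) (p : ℝ) (A : (Fin t → Finset (Fin n)) → Prop) : ℝ :=
  ∑ Ls : Fin t → Finset (Fin n), if A Ls then testsWeight n t p Ls else 0

/-- Joint probability over an ER(n,q) graph and `t` i.i.d. Bernoulli(p) tests. -/
def erTestsProb (n t : ℕ) (q p : ℝ)
    (A : Finset (Sym2 (Fin n)) → (Fin t → Finset (Fin n)) → Prop) : ℝ :=
  ∑ E ∈ (allPairs n).powerset, ∑ Ls : Fin t → Finset (Fin n),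
    if A E Ls then erWeight n q E * testsWeight n t p Ls else 0

/-- Degree of node `v` in the edge set `E`. -/
def degOf {n : ℕ} (E : Finset (Sym2 (Fin n))) (v : Fin n) : ℕ :=
  (E.filter fun e => v ∈ e).card

/-- Maximum degree of the edge set `E`. -/
def maxDeg {n : ℕ} (E : Finset (Sym2 (Fin n))) : ℕ :=
  Finset.univ.sup (degOf E)

/-- Average number of edges of ER(n, q n): `k̄ = q·C(n,2)`. -/
def kbar (q : ℕ → ℝ) (n : ℕ) : ℝ := q n * (n.choose 2 : ℝ)

/-- Two pairs are vertex-disjoint. -/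
def sym2Disjoint {n : ℕ} (e e' : Sym2 (Fin n)) : Prop := ∀ v, v ∈ e → v ∉ e'

/-!
Condition on `{i, j} ⊆ L`. An edge of `G` meeting `i` or `j` is not `{i, j}` and is no loop, so it
has an endpoint outside `{i, j}`; it is then covered together with `i` and `j` with probability
`p³`, and there are at most `2d` such edges. The remaining edges avoid `i` and `j`, so whether `L`
covers one of them is independent of `{i, j} ⊆ L` and has probability at most `P_G[Y = 1]`.
Dividing by `P[{i, j} ⊆ L] = p²` gives the bound.
-/

section BernoulliTest

variable {n : ℕ} {p : ℝ}

lemma testWeight_nonneg (hp0 : 0 ≤ p) (hp1 : p ≤ 1) (L : Finset (Fin n)) :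
    0 ≤ testWeight n p L := by
  have := sub_nonneg.2 hp1
  unfold testWeight
  positivity

lemma testWeight_insert {v : Fin n} {L : Finset (Fin n)} (hv : v ∉ L) :
    (1 - p) * testWeight n p (insert v L) = p * testWeight n p L := by
  have hlt : L.card < n := by simpa using Finset.card_lt_univ_of_notMem hv
  obtain ⟨k, hk⟩ : ∃ k, n - L.card = k + 1 := ⟨n - L.card - 1, by omega⟩
  rw [testWeight, testWeight, card_insert_of_notMem hv, hk, show n - (L.card + 1) = k by omega]
  ring

lemma bernProb_congr {A B : Finset (Fin n) → Prop} (h : ∀ L, A L ↔ B L) :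
    bernProb n p A = bernProb n p B :=
  sum_congr rfl fun L _ => if_congr (h L) rfl rfl

lemma bernProb_mono (hp0 : 0 ≤ p) (hp1 : p ≤ 1) {A B : Finset (Fin n) → Prop}
    (h : ∀ L, A L → B L) : bernProb n p A ≤ bernProb n p B :=
  sum_le_sum fun L _ => by
    have := testWeight_nonneg hp0 hp1 L
    split_ifs with hA hB
    exacts [le_rfl, absurd (h L hA) hB, this, le_rfl]

lemma bernProb_true : bernProb n p (fun _ => True) = 1 := by
  simp [bernProb, testWeight, Fin.sum_pow_mul_eq_add_pow]

lemma bernProb_or_le (hp0 : 0 ≤ p) (hp1 : p ≤ 1) (A B : Finset (Fin n) → Prop) :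
    bernProb n p (fun L => A L ∨ B L) ≤ bernProb n p A + bernProb n p B := by
  rw [bernProb, bernProb, bernProb, ← sum_add_distrib]
  refine sum_le_sum fun L _ => ?_
  have := testWeight_nonneg hp0 hp1 L
  by_cases hA : A L <;> by_cases hB : B L <;> simp [hA, hB, this]

lemma bernProb_exists_le_sum (hp0 : 0 ≤ p) (hp1 : p ≤ 1) {ι : Type*} (F : Finset ι)
    (P : ι → Finset (Fin n) → Prop) :
    bernProb n p (fun L => ∃ e ∈ F, P e L) ≤ ∑ e ∈ F, bernProb n p (P e) := by
  simp only [bernProb]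
  rw [sum_comm]
  refine sum_le_sum fun L _ => ?_
  have hw := testWeight_nonneg hp0 hp1 L
  split_ifs with h
  · obtain ⟨e, he, hPe⟩ := h
    exact (if_pos hPe).symm.trans_le <| single_le_sum
      (f := fun e => if P e L then testWeight n p L else 0) (fun _ _ => ite_nonneg hw le_rfl) he
  · exact sum_nonneg fun _ _ => ite_nonneg hw le_rfl

lemma bernProb_and_mem (v : Fin n) {A : Finset (Fin n) → Prop}
    (hA : ∀ L, A (insert v L) ↔ A L) :
    bernProb n p (fun L => A L ∧ v ∈ L) = p * bernProb n p A := by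
  set T := ∑ L ∈ univ.filter (v ∈ ·), if A L then testWeight n p L else 0
  set S := ∑ L ∈ univ.filter (v ∉ ·), if A L then testWeight n p L else 0
  have hsplit : bernProb n p A = T + S := (sum_filter_add_sum_filter_not _ _ _).symm
  have hT : bernProb n p (fun L => A L ∧ v ∈ L) = T := by
    simp only [T, bernProb, sum_filter]
    exact sum_congr rfl fun L _ => by by_cases v ∈ L <;> simp [*]
  -- adding `v` to a test avoiding it multiplies its weight by `p / (1 - p)`
  have hTS : p * S = (1 - p) * T := by
    rw [mul_sum, mul_sum]
    refine sum_nbij' (insert v) (fun L => L.erase v) ?_ ?_ ?_ ?_ ?_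
    · simp
    · simp
    · intro L hL
      exact erase_insert (by simpa using hL)
    · intro L hL
      exact insert_erase (by simpa using hL)
    · intro L hL
      have hvL : v ∉ L := by simpa using hL
      rw [hA]
      split_ifs
      · exact (testWeight_insert hvL).symm
      · ring
  rw [hT, hsplit]
  linear_combination -hTS

lemma bernProb_and_subset (S : Finset (Fin n)) {A : Finset (Fin n) → Prop}
    (hA : ∀ v ∈ S, ∀ L, A (insert v L) ↔ A L) :
    bernProb n p (fun L => A L ∧ S ⊆ L) = p ^ S.card * bernProb n p A := by
  induction S using Finset.induction_on with
  | empty => simp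
  | @insert a S haS ih =>
    have hindep : ∀ L, (A (insert a L) ∧ S ⊆ insert a L) ↔ (A L ∧ S ⊆ L) := fun L => by
      rw [hA a (mem_insert_self a S), subset_insert_iff_of_notMem haS]
    calc bernProb n p (fun L => A L ∧ insert a S ⊆ L)
        = bernProb n p (fun L => (A L ∧ S ⊆ L) ∧ a ∈ L) :=
          bernProb_congr fun L => by rw [insert_subset_iff]; tauto
      _ = p * (p ^ S.card * bernProb n p A) := by
          rw [bernProb_and_mem a hindep, ih fun v hv => hA v (mem_insert_of_mem hv)]
      _ = p ^ (insert a S).card * bernProb n p A := by rw [card_insert_of_notMem haS]; ring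

lemma bernProb_subset (S : Finset (Fin n)) : bernProb n p (S ⊆ ·) = p ^ S.card := by
  simpa [bernProb_true] using bernProb_and_subset (p := p) S (A := fun _ => True) (by simp)

end BernoulliTest

section Graph

variable {n : ℕ}

lemma degOf_le_maxDeg (E : Finset (Sym2 (Fin n))) (v : Fin n) : degOf E v ≤ maxDeg E :=
  le_sup (mem_univ v)

lemma card_filter_mem_or_mem_le (E : Finset (Sym2 (Fin n))) (i j : Fin n) :
    (E.filter fun e => i ∈ e ∨ j ∈ e).card ≤ 2 * maxDeg E := by
  rw [filter_or]
  calc _ ≤ degOf E i + degOf E j := card_union_le _ _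
    _ ≤ 2 * maxDeg E := by linarith [degOf_le_maxDeg E i, degOf_le_maxDeg E j]

lemma covers_insert_of_forall_notMem {E : Finset (Sym2 (Fin n))} {u : Fin n}
    (hu : ∀ e ∈ E, u ∉ e) (L : Finset (Fin n)) : covers E (insert u L) ↔ covers E L := by
  refine exists_congr fun e => and_congr_right fun he => forall₂_congr fun v hv => ?_
  rw [mem_insert, or_iff_right]
  rintro rfl
  exact hu e he hv

lemma covers_mono {E E' : Finset (Sym2 (Fin n))} (h : E' ⊆ E) {L : Finset (Fin n)}
    (hL : covers E' L) : covers E L :=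
  let ⟨e, he, heL⟩ := hL
  ⟨e, h he, heL⟩

end Graph

lemma Sym2.exists_mem_ne_ne {α : Type*} {e : Sym2 α} {i j : α} (hdiag : ¬ e.IsDiag)
    (hne : e ≠ s(i, j)) (h : i ∈ e ∨ j ∈ e) : ∃ v ∈ e, v ≠ i ∧ v ≠ j := by
  induction e using Sym2.ind with
  | h a b =>
    simp only [Sym2.mk_isDiag_iff, Sym2.mem_iff, ne_eq, Sym2.eq_iff] at hdiag hne h
    by_cases ha : a = i ∨ a = j
    · exact ⟨b, Sym2.mem_mk_right a b, by grind⟩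
    · exact ⟨a, Sym2.mem_mk_left a b, by tauto⟩

section ConditionOnPair

variable {n : ℕ} {p : ℝ} {E : Finset (Sym2 (Fin n))} {i j : Fin n}

lemma bernProb_pair_subset (hij : i ≠ j) : bernProb n p (fun L => i ∈ L ∧ j ∈ L) = p ^ 2 := by
  simpa [insert_subset_iff, hij] using bernProb_subset (p := p) {i, j}

lemma bernProb_exists_edge_near_and_pair_le (hp0 : 0 ≤ p) (hp1 : p ≤ 1)
    (hsimple : ∀ e ∈ E, ¬ e.IsDiag) (hij : i ≠ j) (hnotedge : s(i, j) ∉ E) :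
    bernProb n p (fun L => ∃ e ∈ E.filter (fun e => i ∈ e ∨ j ∈ e), pairIn e L ∧ i ∈ L ∧ j ∈ L)
      ≤ 2 * maxDeg E * p ^ 3 := by
  have hedge : ∀ e ∈ E.filter (fun e => i ∈ e ∨ j ∈ e),
      bernProb n p (fun L => pairIn e L ∧ i ∈ L ∧ j ∈ L) ≤ p ^ 3 := fun e he => by
    obtain ⟨heE, hij_e⟩ := mem_filter.1 he
    obtain ⟨v, hv, hvi, hvj⟩ :=
      Sym2.exists_mem_ne_ne (hsimple e heE) (ne_of_mem_of_not_mem heE hnotedge) hij_e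
    calc bernProb n p (fun L => pairIn e L ∧ i ∈ L ∧ j ∈ L)
        ≤ bernProb n p (({v, i, j} : Finset (Fin n)) ⊆ ·) :=
          bernProb_mono hp0 hp1 fun L hL => by
            simpa [insert_subset_iff] using ⟨hL.1 v hv, hL.2⟩
      _ = p ^ 3 := by rw [bernProb_subset, card_eq_three.2 ⟨v, i, j, hvi, hvj, hij, rfl⟩]
  have hcard : ((E.filter fun e => i ∈ e ∨ j ∈ e).card : ℝ) ≤ 2 * maxDeg E := by
    exact_mod_cast card_filter_mem_or_mem_le E i j
  calc _ ≤ ∑ e ∈ E.filter (fun e => i ∈ e ∨ j ∈ e),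
          bernProb n p (fun L => pairIn e L ∧ i ∈ L ∧ j ∈ L) :=
        bernProb_exists_le_sum hp0 hp1 _ _
    _ ≤ ∑ _e ∈ E.filter (fun e => i ∈ e ∨ j ∈ e), p ^ 3 := sum_le_sum hedge
    _ ≤ 2 * maxDeg E * p ^ 3 := by
        rw [sum_const, nsmul_eq_mul]
        exact mul_le_mul_of_nonneg_right hcard (by positivity)

lemma bernProb_covers_far_and_pair (hij : i ≠ j) :
    bernProb n p (fun L => covers (E.filter fun e => i ∉ e ∧ j ∉ e) L ∧ {i, j} ⊆ L)
      = p ^ 2 * bernProb n p (covers (E.filter fun e => i ∉ e ∧ j ∉ e)) := by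
  rw [bernProb_and_subset, card_pair hij]
  intro v hv
  refine covers_insert_of_forall_notMem fun e he => ?_
  obtain ⟨-, hi, hj⟩ := mem_filter.1 he
  rcases mem_insert.1 hv with rfl | hv
  · exact hi
  · rwa [mem_singleton.1 hv]

end ConditionOnPair

/-- conditional positive-test probability given a non-edge is included.
Let `G` be a simple undirected graph on `{1,…,n}` with maximum degree `d`, let `(i,j)` be a
pair of distinct nodes that is not an edge of `G`, and let `L` be a Bernoulli(p) test.
Then `P_G[Y=1 | {i,j} ⊆ L] ≤ 2dp + P_G[Y=1]`. -/
theorem statement9 (n d : ℕ) (p : ℝ) (hp0 : 0 < p) (hp1 : p < 1)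
    (E : Finset (Sym2 (Fin n))) (hsimple : ∀ e ∈ E, ¬ e.IsDiag)
    (hmax : maxDeg E = d)
    (i j : Fin n) (hij : i ≠ j) (hnotedge : Sym2.mk i j ∉ E) :
    bernProb n p (fun L => covers E L ∧ i ∈ L ∧ j ∈ L) /
        bernProb n p (fun L => i ∈ L ∧ j ∈ L)
      ≤ 2 * d * p + bernProb n p (covers E) := by
  subst hmax
  set near := E.filter fun e => i ∈ e ∨ j ∈ e
  set far := E.filter fun e => i ∉ e ∧ j ∉ e
  have hsplit : ∀ L, covers E L ∧ i ∈ L ∧ j ∈ L →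
      (∃ e ∈ near, pairIn e L ∧ i ∈ L ∧ j ∈ L) ∨ (covers far L ∧ {i, j} ⊆ L) := by
    rintro L ⟨⟨e, he, heL⟩, hi, hj⟩
    by_cases hije : i ∈ e ∨ j ∈ e
    · exact .inl ⟨e, mem_filter.2 ⟨he, hije⟩, heL, hi, hj⟩
    · refine .inr ⟨⟨e, mem_filter.2 ⟨he, not_or.1 hije⟩, heL⟩, ?_⟩
      simp [insert_subset_iff, hi, hj]
  have hfar : bernProb n p (covers far) ≤ bernProb n p (covers E) :=
    bernProb_mono hp0.le hp1.le fun L => covers_mono (filter_subset _ E)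
  rw [bernProb_pair_subset hij, div_le_iff₀ (by positivity)]
  calc bernProb n p (fun L => covers E L ∧ i ∈ L ∧ j ∈ L)
      ≤ bernProb n p (fun L => ∃ e ∈ near, pairIn e L ∧ i ∈ L ∧ j ∈ L)
        + bernProb n p (fun L => covers far L ∧ {i, j} ⊆ L) :=
        (bernProb_mono hp0.le hp1.le hsplit).trans (bernProb_or_le hp0.le hp1.le _ _)
    _ ≤ 2 * maxDeg E * p ^ 3 + p ^ 2 * bernProb n p (covers E) := by
        rw [bernProb_covers_far_and_pair hij]
        gcongr
        exact bernProb_exists_edge_near_and_pair_le hp0.le hp1.le hsimple hij hnotedge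
    _ = (2 * maxDeg E * p + bernProb n p (covers E)) * p ^ 2 := by ring

end
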